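/- Let A ∈ ℝ^{n×n×p} with real T-eigenvalues. Then the T-spectral radius of A is bounded by the spectral radius of the symmetrization: ρ_T(A) ≤ ρ(M_A), where M_A = (bcirc(A) + bcirc(A)^T)/2. -/

import Mathlib

open Matrix

/-- The block circulant matrix of a third-order tensor. -/
def bcirc {n p : ℕ} (A : Fin p → Matrix (Fin n) (Fin n) ℝ) :
    Matrix (Fin p × Fin n) (Fin p × Fin n) ℝ :=
  fun ki lj => A (ki.1 - lj.1) ki.2 lj.2

/-- The T-spectral radius of A is bounded by the spectral radius of the
symmetrization M_A = (bcirc(A) + bcirc(A)ᵀ)/2: every real T-eigenvalue λ of A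
satisfies |λ| ≤ ρ(M_A) = max_i |μ_i(M_A)|. -/
theorem t_spectral_radius_bound {n p : ℕ} [NeZero n] [NeZero p]
    (A : Fin p → Matrix (Fin n) (Fin n) ℝ)
    (hM : ((2 : ℝ)⁻¹ • (bcirc A + (bcirc A)ᵀ)).IsHermitian)
    (lam : ℝ) (y : Fin p × Fin n → ℝ) (hy : y ≠ 0)
    (heig : bcirc A *ᵥ y = lam • y) :
    |lam| ≤ ⨆ i, |hM.eigenvalues i| := by
  classical
  set B := bcirc A
  set M := (2:ℝ)⁻¹ • (B + Bᵀ) with hMdef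
  set U : Matrix (Fin p × Fin n) (Fin p × Fin n) ℝ := (hM.eigenvectorUnitary : Matrix (Fin p × Fin n) (Fin p × Fin n) ℝ)
    with hU
  have hstar : star U = Uᵀ := by
    ext i j
    simp [Matrix.star_apply]
  set z : Fin p × Fin n → ℝ := star U *ᵥ y with hz
  have hUU : U * star U = 1 := (Matrix.mem_unitaryGroup_iff).mp hM.eigenvectorUnitary.2
  have hzy : z = y ᵥ* U := by rw [hz, hstar, Matrix.mulVec_transpose]
  have h1 : y ⬝ᵥ (M *ᵥ y) = lam * (y ⬝ᵥ y) := by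
    have hB : y ⬝ᵥ (B *ᵥ y) = lam * (y ⬝ᵥ y) := by
      rw [heig, dotProduct_smul, smul_eq_mul]
    have hBt : y ⬝ᵥ (Bᵀ *ᵥ y) = lam * (y ⬝ᵥ y) := by
      rw [dotProduct_mulVec, vecMul_transpose, heig, smul_dotProduct, smul_eq_mul]
    rw [hMdef, smul_mulVec, dotProduct_smul, add_mulVec, dotProduct_add, hB, hBt,
      smul_eq_mul]
    ring
  have hMy : y ⬝ᵥ (M *ᵥ y) = z ⬝ᵥ (Matrix.diagonal hM.eigenvalues *ᵥ z) := by
    conv_lhs => rw [hM.spectral_theorem, Unitary.conjStarAlgAut_apply]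
    have hre : RCLike.ofReal ∘ hM.eigenvalues = hM.eigenvalues := rfl
    rw [hre, ← hU, ← Matrix.mulVec_mulVec, ← Matrix.mulVec_mulVec,
      dotProduct_mulVec (v := y), ← hzy, ← hz]
  have hzz : z ⬝ᵥ z = y ⬝ᵥ y := by
    rw [hz, hstar, dotProduct_mulVec, vecMul_transpose, ← hstar, Matrix.mulVec_mulVec, hUU,
      Matrix.one_mulVec]
  have hs : (0:ℝ) < y ⬝ᵥ y := by
    have hnn : (0:ℝ) ≤ y ⬝ᵥ y := Finset.sum_nonneg fun i _ => mul_self_nonneg _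
    rcases lt_or_eq_of_le hnn with h | h
    · exact h
    · exact absurd ((dotProduct_self_eq_zero).mp h.symm) hy
  set C := ⨆ i, |hM.eigenvalues i| with hC
  have hbdd : BddAbove (Set.range fun i => |hM.eigenvalues i|) :=
    Set.Finite.bddAbove (Set.finite_range _)
  have hle : ∀ i, |hM.eigenvalues i| ≤ C := fun i => le_ciSup hbdd i
  have hbound : |lam * (y ⬝ᵥ y)| ≤ C * (y ⬝ᵥ y) := by
    rw [← h1, hMy]
    have hdiag : z ⬝ᵥ (Matrix.diagonal hM.eigenvalues *ᵥ z)
        = ∑ i, hM.eigenvalues i * (z i)^2 := by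
      simp [dotProduct, Matrix.mulVec_diagonal]
      congr 1; ext i; ring
    rw [hdiag]
    calc |∑ i, hM.eigenvalues i * (z i)^2| ≤ ∑ i, |hM.eigenvalues i * (z i)^2| :=
          Finset.abs_sum_le_sum_abs _ _
      _ ≤ ∑ i, C * (z i)^2 := by
          apply Finset.sum_le_sum
          intro i _
          rw [abs_mul, ← pow_abs, sq_abs]
          exact mul_le_mul_of_nonneg_right (hle i) (sq_nonneg _)
      _ = C * (z ⬝ᵥ z) := by
          rw [← Finset.mul_sum]
          congr 1
          simp [dotProduct]
          congr 1; ext i; ring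
      _ = C * (y ⬝ᵥ y) := by rw [hzz]
  rw [abs_mul, abs_of_pos hs] at hbound
  exact le_of_mul_le_mul_right hbound hs
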